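/- Let deg_f denote vertex degrees in the final graph after m edge insertions. In the incremental process where at each insertion (u,v) with both endpoints in the MIS the endpoint of smaller current degree is removed, the sum over all such removal events of the current degree of the removed vertex is at most 2m√m + Σ_{u∈V} √m · deg_f(u) = O(m√m). -/

import Mathlib

def IsIndep {V : Type*} (G : SimpleGraph V) (M : Set V) : Prop :=
  ∀ ⦃u v : V⦄, u ∈ M → v ∈ M → ¬ G.Adj u v

def IsMIS {V : Type*} (G : SimpleGraph V) (M : Set V) : Prop :=
  IsIndep G M ∧ ∀ M' : Set V, M ⊆ M' → IsIndep G M' → M' = M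

/- Incremental MIS with degree-biased removal: starting from the empty graph,
`m` edges `(u i, v i)` are inserted.  When both endpoints lie in the current
MIS, the endpoint of smaller current degree, namely `u i`, is removed.  The
total cost, i.e. the sum over removal events of the current degree of the
removed vertex, is at most `2m√m + Σ_w √m · deg_f(w) = O(m√m)`, where `deg_f`
is the degree in the final graph. -/
theorem stmt_14 {V : Type*} [Fintype V] [DecidableEq V] (m : ℕ)
    (G : Fin (m + 1) → SimpleGraph V) [∀ i, DecidableRel (G i).Adj]
    (M : Fin (m + 1) → Set V) (u v : Fin m → V)
    (h0 : G 0 = ⊥)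
    (hstep : ∀ i : Fin m,
      G i.succ = G i.castSucc ⊔ SimpleGraph.fromEdgeSet {s(u i, v i)})
    (hnew : ∀ i : Fin m, u i ≠ v i ∧ ¬ (G i.castSucc).Adj (u i) (v i))
    (hMIS : ∀ i, IsMIS (G i) (M i))
    (hdeg : ∀ i : Fin m, u i ∈ M i.castSucc → v i ∈ M i.castSucc →
      (G i.castSucc).degree (u i) ≤ (G i.castSucc).degree (v i))
    (hrem : ∀ i : Fin m, (u i ∈ M i.castSucc ∧ v i ∈ M i.castSucc) →
      (u i ∉ M i.succ ∧ M i.castSucc \ {u i} ⊆ M i.succ))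
    (hnorem : ∀ i : Fin m, ¬ (u i ∈ M i.castSucc ∧ v i ∈ M i.castSucc) →
      M i.castSucc ⊆ M i.succ)
    [DecidablePred fun i : Fin m => u i ∈ M i.castSucc ∧ v i ∈ M i.castSucc] :
    ((∑ i ∈ Finset.univ.filter
        (fun i : Fin m => u i ∈ M i.castSucc ∧ v i ∈ M i.castSucc),
        (G i.castSucc).degree (u i) : ℕ) : ℝ) ≤
      2 * m * Real.sqrt m +
        ∑ w : V, Real.sqrt m * ((G (Fin.last m)).degree w : ℝ) := by
  classical
  set s : ℝ := Real.sqrt m with hs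
  have hs0 : 0 ≤ s := Real.sqrt_nonneg _
  have hss : s * s = (m : ℝ) := Real.mul_self_sqrt (by positivity)
  set d : V → ℕ := fun w => (G (Fin.last m)).degree w with hd
  -- monotonicity of the graph sequence
  have hstep' : ∀ i : Fin m, G i.castSucc ≤ G i.succ := fun i => by
    rw [hstep i]; exact le_sup_left
  have hmono : ∀ i j : Fin (m + 1), i ≤ j → G i ≤ G j := by
    intro i j
    induction j using Fin.induction with
    | zero => intro h; rw [Fin.le_zero_iff.mp h]
    | succ k ih =>
      intro h
      by_cases hik : i = k.succ
      · rw [hik]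
      · have : i ≤ k.castSucc := by
          have hlt : i < k.succ := lt_of_le_of_ne h hik
          have : i.val ≤ k.val := Nat.lt_succ_iff.mp (by exact Fin.lt_iff_val_lt_val.mp hlt)
          exact this
        exact le_trans (ih this) (hstep' k)
  -- degree monotonicity
  have hdegmono : ∀ (i j : Fin (m + 1)), i ≤ j → ∀ w : V,
      (G i).degree w ≤ (G j).degree w := by
    intro i j hij w
    apply Finset.card_le_card
    intro x hx
    rw [SimpleGraph.mem_neighborFinset] at hx ⊢
    exact hmono i j hij hx
  -- adjacency of each inserted edge at time `i.succ` and in the final graph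
  have hadjsucc : ∀ i : Fin m, (G i.succ).Adj (u i) (v i) := by
    intro i
    rw [hstep i, SimpleGraph.sup_adj, SimpleGraph.fromEdgeSet_adj]
    exact Or.inr ⟨rfl, (hnew i).1⟩
  have hadjfin : ∀ i : Fin m, (G (Fin.last m)).Adj (u i) (v i) := fun i =>
    hmono i.succ (Fin.last m) (Fin.le_last _) (hadjsucc i)
  -- injectivity of the edge sequence
  have heinj : ∀ i j : Fin m, s(u i, v i) = s(u j, v j) → i = j := by
    have key : ∀ i j : Fin m, i < j → s(u i, v i) ≠ s(u j, v j) := by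
      intro i j hij he
      have hle : i.succ ≤ j.castSucc := by
        simpa using hij
      have hadj : (G j.castSucc).Adj (u i) (v i) :=
        hmono i.succ j.castSucc hle (hadjsucc i)
      rcases Sym2.eq_iff.mp he with ⟨h1, h2⟩ | ⟨h1, h2⟩
      · exact (hnew j).2 (h1 ▸ h2 ▸ hadj)
      · exact (hnew j).2 (h1 ▸ h2 ▸ hadj.symm)
    intro i j he
    rcases lt_trichotomy i j with h | h | h
    · exact absurd he (key i j h)
    · exact h
    · exact absurd he.symm (key j i h)
  -- the final graph has at most `m` edges, hence degree sum at most `2 m`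
  have hedges : ∀ j : Fin (m + 1),
      (G j).edgeSet ⊆ Set.range (fun i : Fin m => s(u i, v i)) := by
    intro j
    induction j using Fin.induction with
    | zero => rw [h0, SimpleGraph.edgeSet_bot]; exact Set.empty_subset _
    | succ k ih =>
      rw [hstep k, SimpleGraph.edgeSet_sup]
      apply Set.union_subset ih
      rw [SimpleGraph.edgeSet_fromEdgeSet]
      intro e he
      rcases he.1 with rfl
      exact ⟨k, rfl⟩
  have hsumdeg : ∑ w : V, d w ≤ 2 * m := by
    have h2 : ∑ w : V, d w = 2 * (G (Fin.last m)).edgeFinset.card :=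
      SimpleGraph.sum_degrees_eq_twice_card_edges _
    rw [h2]
    have hsub : (G (Fin.last m)).edgeFinset ⊆
        Finset.image (fun i : Fin m => s(u i, v i)) Finset.univ := by
      intro e he
      rcases hedges (Fin.last m) (SimpleGraph.mem_edgeFinset.mp he) with ⟨i, rfl⟩
      exact Finset.mem_image_of_mem _ (Finset.mem_univ i)
    have h3 : (G (Fin.last m)).edgeFinset.card ≤ m := by
      calc (G (Fin.last m)).edgeFinset.card
          ≤ (Finset.image (fun i : Fin m => s(u i, v i)) Finset.univ).card :=
            Finset.card_le_card hsub
        _ ≤ (Finset.univ : Finset (Fin m)).card := Finset.card_image_le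
        _ = m := by simp
    omega
  -- the smaller / larger (by final degree) endpoints of each inserted edge
  set a : Fin m → V := fun i => if d (u i) ≤ d (v i) then u i else v i with ha
  set b : Fin m → V := fun i => if d (u i) ≤ d (v i) then v i else u i with hb
  have hab : ∀ i, s(a i, b i) = s(u i, v i) := by
    intro i
    by_cases h : d (u i) ≤ d (v i) <;> simp [ha, hb, h, Sym2.eq_swap]
  have hdab : ∀ i, d (a i) ≤ d (b i) := by
    intro i
    by_cases h : d (u i) ≤ d (v i) <;> simp [ha, hb, h]
    exact le_of_not_ge h
  have hadjab : ∀ i, (G (Fin.last m)).Adj (a i) (b i) := by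
    intro i
    by_cases h : d (u i) ≤ d (v i) <;> simp [ha, hb, h]
    exacts [hadjfin i, (hadjfin i).symm]
  set S : Finset (Fin m) := Finset.univ.filter
    (fun i : Fin m => u i ∈ M i.castSucc ∧ v i ∈ M i.castSucc) with hS
  -- the cost of each event is at most the final degree of the smaller endpoint
  have hcost : ∀ i ∈ S, (G i.castSucc).degree (u i) ≤ d (a i) := by
    intro i hi
    rw [hS, Finset.mem_filter] at hi
    have h1 : (G i.castSucc).degree (u i) ≤ d (u i) :=
      hdegmono i.castSucc (Fin.last m) (Fin.le_last _) (u i)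
    have h2 : (G i.castSucc).degree (u i) ≤ d (v i) :=
      (hdeg i hi.2.1 hi.2.2).trans
        (hdegmono i.castSucc (Fin.last m) (Fin.le_last _) (v i))
    by_cases h : d (u i) ≤ d (v i) <;> simp [ha, h, h1, h2]
  -- key per-vertex bound
  have hkey : ∀ w : V,
      (∑ i ∈ S.filter (fun i => a i = w), ((G i.castSucc).degree (u i) : ℝ)) ≤
        s * d w + (if s < (d w : ℝ) then (m : ℝ) else 0) := by
    intro w
    set Sw := S.filter (fun i => a i = w) with hSw
    have hcard : ∀ (T : Finset V), (∀ i ∈ Sw, b i ∈ T) → Sw.card ≤ T.card := by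
      intro T hT
      apply Finset.card_le_card_of_injOn b hT
      intro i hi j hj hbij
      have hai : a i = w := (Finset.mem_filter.mp hi).2
      have haj : a j = w := (Finset.mem_filter.mp hj).2
      apply heinj
      rw [← hab i, ← hab j, hai, haj, hbij]
    have hsum1 : (∑ i ∈ Sw, ((G i.castSucc).degree (u i) : ℝ)) ≤
        (Sw.card : ℝ) * (d w : ℝ) := by
      rw [Finset.card_eq_sum_ones Sw]
      push_cast
      rw [Finset.sum_mul]
      apply Finset.sum_le_sum
      intro i hi
      have hai : a i = w := (Finset.mem_filter.mp hi).2
      have := hcost i (Finset.mem_filter.mp hi).1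
      rw [hai] at this
      simpa using (Nat.cast_le (α := ℝ)).mpr this
    by_cases hheavy : s < (d w : ℝ)
    · -- heavy vertex: `card Sw * d w ≤ 2 m ≤ m + s * d w`
      have hT : Sw.card ≤ (Finset.univ.filter (fun x => d w ≤ d x)).card := by
        apply hcard
        intro i hi
        have hai : a i = w := (Finset.mem_filter.mp hi).2
        rw [Finset.mem_filter]
        exact ⟨Finset.mem_univ _, hai ▸ hdab i⟩
      have h2m : Sw.card * d w ≤ 2 * m := by
        calc Sw.card * d w ≤ (Finset.univ.filter (fun x => d w ≤ d x)).card * d w :=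
              Nat.mul_le_mul_right _ hT
          _ = ∑ _x ∈ Finset.univ.filter (fun x => d w ≤ d x), d w := by
              rw [Finset.sum_const, smul_eq_mul]
          _ ≤ ∑ x ∈ Finset.univ.filter (fun x => d w ≤ d x), d x :=
              Finset.sum_le_sum (fun x hx => (Finset.mem_filter.mp hx).2)
          _ ≤ ∑ x : V, d x := Finset.sum_le_sum_of_subset (Finset.filter_subset _ _)
          _ ≤ 2 * m := hsumdeg
      have hms : (m : ℝ) ≤ s * d w := by
        calc (m : ℝ) = s * s := hss.symm
          _ ≤ s * d w := by
              apply mul_le_mul_of_nonneg_left (le_of_lt hheavy) hs0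
      calc (∑ i ∈ Sw, ((G i.castSucc).degree (u i) : ℝ)) ≤ (Sw.card : ℝ) * d w :=
            hsum1
        _ ≤ ((2 * m : ℕ) : ℝ) := by exact_mod_cast h2m
        _ = 2 * (m : ℝ) := by push_cast; ring
        _ = (m : ℝ) + m := by ring
        _ ≤ s * d w + (if s < (d w : ℝ) then (m : ℝ) else 0) := by
            rw [if_pos hheavy]; exact add_le_add hms le_rfl
    · -- light vertex: `card Sw ≤ d w ≤ s`
      have hT : Sw.card ≤ ((G (Fin.last m)).neighborFinset w).card := by
        apply hcard
        intro i hi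
        have hai : a i = w := (Finset.mem_filter.mp hi).2
        rw [SimpleGraph.mem_neighborFinset]
        exact hai ▸ hadjab i
      have hTd : Sw.card ≤ d w := hT
      have hws : (d w : ℝ) ≤ s := le_of_not_gt hheavy
      calc (∑ i ∈ Sw, ((G i.castSucc).degree (u i) : ℝ)) ≤ (Sw.card : ℝ) * d w :=
            hsum1
        _ ≤ (d w : ℝ) * d w := by
            apply mul_le_mul_of_nonneg_right _ (by positivity)
            exact_mod_cast hTd
        _ ≤ s * d w := mul_le_mul_of_nonneg_right hws (by positivity)
        _ ≤ s * d w + (if s < (d w : ℝ) then (m : ℝ) else 0) := by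
            rw [if_neg hheavy]; simp
  -- number of heavy vertices is at most `2 √m`
  have hheavycount : (∑ w : V, (if s < (d w : ℝ) then (m : ℝ) else 0)) ≤ 2 * m * s := by
    set H := Finset.univ.filter (fun w => s < (d w : ℝ)) with hH
    have h1 : (∑ w : V, (if s < (d w : ℝ) then (m : ℝ) else 0)) = (H.card : ℝ) * m := by
      rw [Finset.sum_ite, Finset.sum_const_zero, add_zero, Finset.sum_const, nsmul_eq_mul, hH]
    have h2 : (H.card : ℝ) * s ≤ 2 * m := by
      calc (H.card : ℝ) * s = ∑ _w ∈ H, s := by rw [Finset.sum_const, nsmul_eq_mul]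
        _ ≤ ∑ w ∈ H, (d w : ℝ) :=
            Finset.sum_le_sum (fun w hw => le_of_lt (Finset.mem_filter.mp hw).2)
        _ ≤ ∑ w : V, (d w : ℝ) := by
            apply Finset.sum_le_sum_of_subset_of_nonneg (Finset.filter_subset _ _)
            intro w _ _; positivity
        _ ≤ 2 * m := by
            have := (Nat.cast_le (α := ℝ)).mpr hsumdeg
            push_cast at this ⊢
            linarith
    calc (∑ w : V, (if s < (d w : ℝ) then (m : ℝ) else 0)) = (H.card : ℝ) * m := h1
      _ = ((H.card : ℝ) * s) * s := by rw [mul_assoc, hss]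
      _ ≤ (2 * m) * s := mul_le_mul_of_nonneg_right h2 hs0
      _ = 2 * m * s := by ring
  -- put everything together
  have hregroup : (∑ i ∈ S, ((G i.castSucc).degree (u i) : ℝ)) =
      ∑ w : V, ∑ i ∈ S.filter (fun i => a i = w), ((G i.castSucc).degree (u i) : ℝ) :=
    (Finset.sum_fiberwise S a _).symm
  calc ((∑ i ∈ S, (G i.castSucc).degree (u i) : ℕ) : ℝ)
      = ∑ i ∈ S, ((G i.castSucc).degree (u i) : ℝ) := by push_cast; rfl
    _ = ∑ w : V, ∑ i ∈ S.filter (fun i => a i = w), ((G i.castSucc).degree (u i) : ℝ) :=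
        hregroup
    _ ≤ ∑ w : V, (s * d w + (if s < (d w : ℝ) then (m : ℝ) else 0)) :=
        Finset.sum_le_sum (fun w _ => hkey w)
    _ = (∑ w : V, (if s < (d w : ℝ) then (m : ℝ) else 0)) + ∑ w : V, s * (d w : ℝ) := by
        rw [Finset.sum_add_distrib]; ring
    _ ≤ 2 * m * s + ∑ w : V, s * (d w : ℝ) := add_le_add hheavycount le_rfl
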